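/- In the Witt algebra W(l₁,l₂,l₃;Γ) = A·D with bracket [u∂_p, v∂_q] = u∂_p(v)∂_q − v∂_q(u)∂_p extended bilinearly, the set S(l₁,l₂,l₃;0,Γ) spanned by all elements D_{p,q}(u) = ∂_p(u)∂_q − ∂_q(u)∂_p (p,q ∈ {1,…,l}, u ∈ A) is closed under the Lie bracket, i.e., it forms a Lie subalgebra of W(l₁,l₂,l₃;Γ). -/

import Mathlib

open scoped BigOperators

namespace SDF

variable (F : Type) [Field F] [IsAlgClosed F] [CharZero F]
variable (l₁ l₂ l₃ : ℕ) (Γ : AddSubgroup (Fin (l₂ + l₃) → F))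

/-- The semigroup algebra `A(l₁,l₂,l₃;Γ) = F[Γ × ℕ^{l₁+l₂}]`,
with basis `x^α t^i` for `α ∈ Γ`, `i ∈ ℕ^{l₁+l₂}`. -/
abbrev Alg : Type := AddMonoidAlgebra F (↥Γ × (Fin (l₁ + l₂) →₀ ℕ))

/-- The basis monomial `x^α t^i`. -/
noncomputable def mono (α : Γ) (i : Fin (l₁ + l₂) →₀ ℕ) : Alg F l₁ l₂ l₃ Γ :=
  AddMonoidAlgebra.single (α, i) 1

/-- The `p`-th coordinate of `α ∈ Γ ⊆ F^{l₂+l₃}`, with the convention `α_p = 0` for `p ≤ l₁`. -/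
def acoord (p : Fin (l₁ + l₂ + l₃)) (α : Γ) : F :=
  if h : l₁ ≤ (p : ℕ) then (α : Fin (l₂ + l₃) → F) ⟨(p : ℕ) - l₁, by have := p.isLt; omega⟩
  else 0

/-- The `p`-th coordinate of a general `μ ∈ F^{l₂+l₃}`, with the convention `μ_p = 0` for `p ≤ l₁`. -/
def fcoord (p : Fin (l₁ + l₂ + l₃)) (μ : Fin (l₂ + l₃) → F) : F :=
  if h : l₁ ≤ (p : ℕ) then μ ⟨(p : ℕ) - l₁, by have := p.isLt; omega⟩ else 0

/-- The `p`-th component of `i ∈ ℕ^{l₁+l₂}`, with the convention `i_p = 0` for `p > l₁+l₂`. -/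
def icoord (p : Fin (l₁ + l₂ + l₃)) (i : Fin (l₁ + l₂) →₀ ℕ) : ℕ :=
  if h : (p : ℕ) < l₁ + l₂ then i ⟨(p : ℕ), h⟩ else 0

/-- `i - 1_[p]` (truncated subtraction; only used with coefficient `i_p`). -/
noncomputable def lower (p : Fin (l₁ + l₂ + l₃)) (i : Fin (l₁ + l₂) →₀ ℕ) : Fin (l₁ + l₂) →₀ ℕ :=
  if h : (p : ℕ) < l₁ + l₂ then i - Finsupp.single ⟨(p : ℕ), h⟩ 1 else i

/-- The derivation `∂_p` of `A(l₁,l₂,l₃;Γ)`: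
`∂_p(x^α t^i) = α_p x^α t^i + i_p x^α t^{i - 1_[p]}`. -/
noncomputable def pd (p : Fin (l₁ + l₂ + l₃)) :
    Alg F l₁ l₂ l₃ Γ →ₗ[F] Alg F l₁ l₂ l₃ Γ :=
  (Finsupp.lsum F fun g : ↥Γ × (Fin (l₁ + l₂) →₀ ℕ) =>
    LinearMap.toSpanSingleton F (Alg F l₁ l₂ l₃ Γ)
      (acoord F l₁ l₂ l₃ Γ p g.1 • mono F l₁ l₂ l₃ Γ g.1 g.2
        + (icoord l₁ l₂ l₃ p g.2 : F) • mono F l₁ l₂ l₃ Γ g.1 (lower l₁ l₂ l₃ p g.2)))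
    ∘ₗ (AddMonoidAlgebra.coeffLinearEquiv F).toLinearMap

/-- The Witt algebra `W(l₁,l₂,l₃;Γ) = A·D`; the tuple `u : Wt` represents `Σ_p u_p ∂_p`. -/
abbrev Wt : Type := Fin (l₁ + l₂ + l₃) → Alg F l₁ l₂ l₃ Γ

/-- The Lie bracket of `W(l₁,l₂,l₃;Γ)`:
`[Σ_p u_p ∂_p, Σ_q v_q ∂_q] = Σ_{p,q} (u_p ∂_p(v_q) - v_p ∂_p(u_q)) ∂_q`. -/
noncomputable def wbr (u v : Wt F l₁ l₂ l₃ Γ) : Wt F l₁ l₂ l₃ Γ :=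
  fun r => ∑ p, (u p * pd F l₁ l₂ l₃ Γ p (v r) - v p * pd F l₁ l₂ l₃ Γ p (u r))

/-- `D_{p,q}(u) = ∂_p(u) ∂_q - ∂_q(u) ∂_p`. -/
noncomputable def Dpq (p q : Fin (l₁ + l₂ + l₃)) (u : Alg F l₁ l₂ l₃ Γ) :
    Wt F l₁ l₂ l₃ Γ :=
  Pi.single q (pd F l₁ l₂ l₃ Γ p u) - Pi.single p (pd F l₁ l₂ l₃ Γ q u)

/-- The divergence-free algebra `S(l₁,l₂,l₃;0,Γ) = Span{D_{p,q}(u)}`. -/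
noncomputable def Ssub : Submodule F (Wt F l₁ l₂ l₃ Γ) :=
  Submodule.span F {w | ∃ p q u, w = Dpq F l₁ l₂ l₃ Γ p q u}

/-- `Γ` is nondegenerate: it contains an `F`-basis of `F^{l₂+l₃}`, i.e. it spans. -/
def Nondeg : Prop := Submodule.span F (Γ : Set (Fin (l₂ + l₃) → F)) = ⊤

/-- The divergence `div(Σ_p u_p ∂_p) = Σ_p ∂_p(u_p)`. -/
noncomputable def dvg (w : Wt F l₁ l₂ l₃ Γ) : Alg F l₁ l₂ l₃ Γ :=
  ∑ p, pd F l₁ l₂ l₃ Γ p (w p)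

/-- The action of `Σ_p u_p ∂_p ∈ W` on `A_μ` (the space `A` with basis `v_{β,i}` the monomials):
`(u ∂_p) . v = u * (∂_p + μ_p) v`. On basis elements this gives exactly the defining formulas
of the module `A_μ`. -/
noncomputable def actW (μ : Fin (l₂ + l₃) → F) (X : Wt F l₁ l₂ l₃ Γ) :
    Alg F l₁ l₂ l₃ Γ →ₗ[F] Alg F l₁ l₂ l₃ Γ :=
  ∑ p, (LinearMap.mulLeft F (X p)).comp
    (pd F l₁ l₂ l₃ Γ p + fcoord F l₁ l₂ l₃ p μ • LinearMap.id)

/-- The element `Σ_p a_p ∂_p` of `D ⊆ W`. -/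
noncomputable def wD (a : Fin (l₁ + l₂ + l₃) → F) : Wt F l₁ l₂ l₃ Γ :=
  fun p => algebraMap F (Alg F l₁ l₂ l₃ Γ) (a p)

/-- The element `∂_p ∈ W`. -/
noncomputable def wdelta (p : Fin (l₁ + l₂ + l₃)) : Wt F l₁ l₂ l₃ Γ :=
  Pi.single p 1

/-- `β(∂) = Σ_{p>l₁} a_p β_p` for `∂ = Σ_p a_p ∂_p`. -/
def beval (β : Fin (l₂ + l₃) → F) (a : Fin (l₁ + l₂ + l₃) → F) : F :=
  ∑ p, a p * fcoord F l₁ l₂ l₃ p β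

end SDF

/-! Each `∂_p` is a derivation of `A`, and the `∂_p` commute. Expanding
`[D_{p,q}(u), D_{r,s}(v)]` by the Leibniz rule, the second-order terms cancel because
`∂_p ∂_r = ∂_r ∂_p`, and the remaining first-order terms regroup, again by Leibniz, into
`D_{q,s}(∂_p u ∂_r v) - D_{q,r}(∂_p u ∂_s v) - D_{p,s}(∂_q u ∂_r v) + D_{p,r}(∂_q u ∂_s v)`.
As the bracket is bilinear, the span of the `D_{p,q}(u)` is therefore closed under it. -/

namespace SDF

variable {F : Type} [Field F] {l₁ l₂ l₃ : ℕ} {Γ : AddSubgroup (Fin (l₂ + l₃) → F)}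

local notation "∂" => pd F l₁ l₂ l₃ Γ

lemma acoord_add (p : Fin (l₁ + l₂ + l₃)) (α β : Γ) :
    acoord F l₁ l₂ l₃ Γ p (α + β) = acoord F l₁ l₂ l₃ Γ p α + acoord F l₁ l₂ l₃ Γ p β := by
  unfold acoord; split_ifs <;> simp

lemma icoord_add (p : Fin (l₁ + l₂ + l₃)) (i j : Fin (l₁ + l₂) →₀ ℕ) :
    icoord l₁ l₂ l₃ p (i + j) = icoord l₁ l₂ l₃ p i + icoord l₁ l₂ l₃ p j := by
  unfold icoord; split_ifs <;> simp

lemma icoord_lower_of_ne {p q : Fin (l₁ + l₂ + l₃)} (hpq : p ≠ q) (i : Fin (l₁ + l₂) →₀ ℕ) :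
    icoord l₁ l₂ l₃ q (lower l₁ l₂ l₃ p i) = icoord l₁ l₂ l₃ q i := by
  unfold lower icoord
  split_ifs <;> try rfl
  rw [Finsupp.tsub_apply, Finsupp.single_eq_of_ne (by simpa [Fin.ext_iff] using hpq.symm),
    Nat.sub_zero]

lemma lower_comm (p q : Fin (l₁ + l₂ + l₃)) (i : Fin (l₁ + l₂) →₀ ℕ) :
    lower l₁ l₂ l₃ p (lower l₁ l₂ l₃ q i) = lower l₁ l₂ l₃ q (lower l₁ l₂ l₃ p i) := by
  unfold lower
  split_ifs <;> try rfl
  rw [tsub_tsub, tsub_tsub, add_comm (Finsupp.single _ _)]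

lemma lower_add_of_icoord_ne_zero {p : Fin (l₁ + l₂ + l₃)} {i : Fin (l₁ + l₂) →₀ ℕ}
    (hi : icoord l₁ l₂ l₃ p i ≠ 0) (j : Fin (l₁ + l₂) →₀ ℕ) :
    lower l₁ l₂ l₃ p (i + j) = lower l₁ l₂ l₃ p i + j := by
  unfold icoord at hi
  unfold lower
  split_ifs at hi ⊢ with h
  · exact tsub_add_eq_add_tsub (Finsupp.single_le_iff.mpr (Nat.one_le_iff_ne_zero.mpr hi)) |>.symm
  · exact absurd rfl hi

-- `lower` truncates, so `lower p (i + j) = lower p i + j` fails when `i_p = 0`; then the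
-- coefficient `i_p` kills both sides.
lemma icoord_smul_mono_lower_add (p : Fin (l₁ + l₂ + l₃)) (γ : Γ) (i j : Fin (l₁ + l₂) →₀ ℕ) :
    (icoord l₁ l₂ l₃ p i : F) • mono F l₁ l₂ l₃ Γ γ (lower l₁ l₂ l₃ p (i + j))
      = (icoord l₁ l₂ l₃ p i : F) • mono F l₁ l₂ l₃ Γ γ (lower l₁ l₂ l₃ p i + j) := by
  by_cases hi : icoord l₁ l₂ l₃ p i = 0
  · simp [hi]
  · rw [lower_add_of_icoord_ne_zero hi]

lemma mono_mul (α β : Γ) (i j : Fin (l₁ + l₂) →₀ ℕ) :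
    mono F l₁ l₂ l₃ Γ α i * mono F l₁ l₂ l₃ Γ β j = mono F l₁ l₂ l₃ Γ (α + β) (i + j) := by
  simp [mono, AddMonoidAlgebra.single_mul_single]

lemma pd_mono (p : Fin (l₁ + l₂ + l₃)) (α : Γ) (i : Fin (l₁ + l₂) →₀ ℕ) :
    ∂ p (mono F l₁ l₂ l₃ Γ α i)
      = acoord F l₁ l₂ l₃ Γ p α • mono F l₁ l₂ l₃ Γ α i
        + (icoord l₁ l₂ l₃ p i : F) • mono F l₁ l₂ l₃ Γ α (lower l₁ l₂ l₃ p i) := by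
  simp [pd, mono]

lemma pd_mono_mul_mono (p : Fin (l₁ + l₂ + l₃)) (α β : Γ) (i j : Fin (l₁ + l₂) →₀ ℕ) :
    ∂ p (mono F l₁ l₂ l₃ Γ α i * mono F l₁ l₂ l₃ Γ β j)
      = ∂ p (mono F l₁ l₂ l₃ Γ α i) * mono F l₁ l₂ l₃ Γ β j
        + mono F l₁ l₂ l₃ Γ α i * ∂ p (mono F l₁ l₂ l₃ Γ β j) := by
  have hj := icoord_smul_mono_lower_add (F := F) p (α + β) j i
  rw [add_comm j i, add_comm (lower l₁ l₂ l₃ p j) i] at hj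
  simp only [mono_mul, pd_mono, acoord_add, icoord_add, Nat.cast_add, add_smul,
    icoord_smul_mono_lower_add, hj, add_mul, mul_add, smul_mul_assoc, mul_smul_comm]
  abel

lemma pd_mul (p : Fin (l₁ + l₂ + l₃)) (u v : Alg F l₁ l₂ l₃ Γ) :
    ∂ p (u * v) = ∂ p u * v + u * ∂ p v := by
  induction u using AddMonoidAlgebra.induction_on with
  | add f g hf hg => simp only [add_mul, map_add, hf, hg]; abel
  | smul r f hf => simp only [smul_mul_assoc, map_smul, hf, smul_add]
  | of a =>
    induction v using AddMonoidAlgebra.induction_on with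
    | add f g hf hg => simp only [mul_add, map_add, hf, hg]; abel
    | smul r f hf => simp only [mul_smul_comm, map_smul, hf, smul_add]
    | of b => exact pd_mono_mul_mono p a.1 b.1 a.2 b.2

lemma pd_comm (p q : Fin (l₁ + l₂ + l₃)) (u : Alg F l₁ l₂ l₃ Γ) :
    ∂ p (∂ q u) = ∂ q (∂ p u) := by
  rcases eq_or_ne p q with rfl | hpq
  · rfl
  induction u using AddMonoidAlgebra.induction_on with
  | add f g hf hg => simp only [map_add, hf, hg]
  | smul r f hf => simp only [map_smul, hf]
  | of a =>
    change ∂ p (∂ q (mono F l₁ l₂ l₃ Γ a.1 a.2)) = ∂ q (∂ p (mono F l₁ l₂ l₃ Γ a.1 a.2))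
    simp only [pd_mono, map_add, map_smul, lower_comm p q, icoord_lower_of_ne hpq,
      icoord_lower_of_ne hpq.symm]
    module

noncomputable def wbrBilin : Wt F l₁ l₂ l₃ Γ →ₗ[F] Wt F l₁ l₂ l₃ Γ →ₗ[F] Wt F l₁ l₂ l₃ Γ :=
  LinearMap.mk₂ F (wbr F l₁ l₂ l₃ Γ)
    (fun X X' Y => funext fun r => by
      simp only [wbr, Pi.add_apply, map_add, add_mul, mul_add, ← Finset.sum_add_distrib]
      exact Finset.sum_congr rfl fun _ _ => by abel)
    (fun c X Y => funext fun r => by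
      simp only [wbr, Pi.smul_apply, map_smul, smul_mul_assoc, mul_smul_comm, ← smul_sub,
        Finset.smul_sum])
    (fun X Y Y' => funext fun r => by
      simp only [wbr, Pi.add_apply, map_add, add_mul, mul_add, ← Finset.sum_add_distrib]
      exact Finset.sum_congr rfl fun _ _ => by abel)
    (fun c X Y => funext fun r => by
      simp only [wbr, Pi.smul_apply, map_smul, smul_mul_assoc, mul_smul_comm, ← smul_sub,
        Finset.smul_sum])

lemma wbr_Dpq_Dpq (p q r s : Fin (l₁ + l₂ + l₃)) (u v : Alg F l₁ l₂ l₃ Γ) :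
    wbr F l₁ l₂ l₃ Γ (Dpq F l₁ l₂ l₃ Γ p q u) (Dpq F l₁ l₂ l₃ Γ r s v)
      = Dpq F l₁ l₂ l₃ Γ q s (∂ p u * ∂ r v) - Dpq F l₁ l₂ l₃ Γ q r (∂ p u * ∂ s v)
        - Dpq F l₁ l₂ l₃ Γ p s (∂ q u * ∂ r v) + Dpq F l₁ l₂ l₃ Γ p r (∂ q u * ∂ s v) := by
  funext t
  simp only [wbr, Dpq, Pi.sub_apply, Pi.add_apply, Pi.single_apply, map_sub, apply_ite (∂ _),
    map_zero, sub_mul, mul_sub, ite_mul, zero_mul, Finset.sum_sub_distrib, Finset.sum_ite_eq',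
    Finset.mem_univ, if_true, pd_mul, pd_comm q p u, pd_comm s r v]
  split_ifs <;> ring

lemma wbr_Dpq_Dpq_mem_Ssub (p q r s : Fin (l₁ + l₂ + l₃)) (u v : Alg F l₁ l₂ l₃ Γ) :
    wbr F l₁ l₂ l₃ Γ (Dpq F l₁ l₂ l₃ Γ p q u) (Dpq F l₁ l₂ l₃ Γ r s v) ∈ Ssub F l₁ l₂ l₃ Γ := by
  rw [wbr_Dpq_Dpq]
  refine add_mem (sub_mem (sub_mem ?_ ?_) ?_) ?_ <;> exact Submodule.subset_span ⟨_, _, _, rfl⟩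

end SDF

namespace SDF

variable (F : Type) [Field F] [IsAlgClosed F] [CharZero F]
variable (l₁ l₂ l₃ : ℕ) (Γ : AddSubgroup (Fin (l₂ + l₃) → F))

theorem stmt3 :
    ∀ X ∈ Ssub F l₁ l₂ l₃ Γ, ∀ Y ∈ Ssub F l₁ l₂ l₃ Γ,
      wbr F l₁ l₂ l₃ Γ X Y ∈ Ssub F l₁ l₂ l₃ Γ := by
  have hclosed : Submodule.map₂ wbrBilin (Ssub F l₁ l₂ l₃ Γ) (Ssub F l₁ l₂ l₃ Γ)
      ≤ Ssub F l₁ l₂ l₃ Γ := by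
    rw [Ssub, Submodule.map₂_span_span, Submodule.span_le]
    rintro _ ⟨_, ⟨p, q, u, rfl⟩, _, ⟨r, s, v, rfl⟩, rfl⟩
    exact wbr_Dpq_Dpq_mem_Ssub p q r s u v
  exact Submodule.map₂_le.mp hclosed

end SDF
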